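/- arXiv:math/0208111 — 3 statements merged into one kernel-verified Lean document; each statement's English description precedes it below -/
import Mathlib

section
/- Let w ∈ L^1(0,1) with w ≥ 0 and ∫₀¹ w(x) dx < 1. Suppose f and g are nonnegative bounded functions on (0,∞) satisfying f(t) ≤ g(t) + ∫₀¹ w(τ) f(τt) dτ for all t > 0. If g(t) → 0 as t → ∞, then f(t) → 0 as t → ∞. -/
open MeasureTheory Set Filter Topology

/-!
Let `c = ∫₀¹ w < 1`. If `f ≤ a` on `[T, ∞)`, split the integral at a small `δ`: the part over
`(0, δ)` is at most `M ∫₀^δ w`, which is small since `f ≤ M`, and for `t ≥ T / δ` the part over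
`[δ, 1)` is at most `c a`. Hence `f ≤ c a + K` eventually, for every `K > 0`. Iterating this
affine contraction from `a = M` pushes the eventual bound on `f` below any `ε > 0`.
-/

theorem forall_pos_of_mul_add_step {P : ℝ → Prop} {c M : ℝ} (hc0 : 0 ≤ c) (hc1 : c < 1)
    (hM : 0 ≤ M) (hPM : P M) (hP : Monotone P)
    (hstep : ∀ a, 0 ≤ a → P a → ∀ K, 0 < K → P (c * a + K)) :
    ∀ ε, 0 < ε → P ε := by
  intro ε hε
  have hiter : ∀ n : ℕ, P (c ^ n * M + ε / 2) := by
    intro n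
    induction n with
    | zero => exact hP (by linarith) hPM
    | succ n ih =>
      convert hstep _ (by positivity) ih ((1 - c) * ε / 2) (by nlinarith) using 1
      ring
  have hlim : Tendsto (fun n : ℕ => c ^ n * M) atTop (𝓝 0) := by
    simpa using (tendsto_pow_atTop_nhds_zero_of_lt_one hc0 hc1).mul_const M
  obtain ⟨n, hn⟩ := (hlim.eventually (gt_mem_nhds (half_pos hε))).exists
  exact hP (by linarith) (hiter n)

theorem tendsto_setIntegral_Ioo_zero_nhdsGT {w : ℝ → ℝ} (hw : IntegrableOn w (Ioo 0 1)) :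
    Tendsto (fun δ => ∫ x in Ioo 0 δ, w x) (𝓝[>] 0) (𝓝 0) := by
  have hprim := intervalIntegral.continuousOn_primitive_interval' (a := 0)
    ((intervalIntegrable_iff_integrableOn_Ioo_of_le zero_le_one).2 hw) (by simp)
  have hcont := (hprim 0 (by simp)).tendsto
  rw [intervalIntegral.integral_same] at hcont
  have hle : 𝓝[>] (0 : ℝ) ≤ 𝓝[uIcc 0 1] 0 := nhdsWithin_le_of_mem <|
    mem_of_superset (Ioo_mem_nhdsGT zero_lt_one) (Ioo_subset_Icc_self.trans (by simp))
  refine (hcont.mono_left hle).congr' ?_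
  filter_upwards [self_mem_nhdsWithin] with δ hδ
  rw [intervalIntegral.integral_of_le (le_of_lt hδ), integral_Ioc_eq_integral_Ioo]

section
variable {w f : ℝ → ℝ} {a M t δ : ℝ}

theorem setIntegral_mul_comp_mul_le (hw_int : IntegrableOn w (Ioo 0 1))
    (hw_nonneg : ∀ x ∈ Ioo (0 : ℝ) 1, 0 ≤ w x) (hf_nonneg : ∀ s : ℝ, 0 < s → 0 ≤ f s)
    (hfM : ∀ s : ℝ, 0 < s → f s ≤ M) (ha : 0 ≤ a) (ht : 0 < t) (hδ : δ ≤ 1)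
    (hfa : ∀ s, δ * t ≤ s → f s ≤ a) :
    ∫ τ in Ioo 0 1, w τ * f (τ * t) ≤ (∫ x in Ioo 0 1, w x) * a + M * ∫ x in Ioo 0 δ, w x := by
  have hbound : ∀ τ ∈ Ioo (0 : ℝ) 1, w τ * f (τ * t) ≤ w τ * a + M * (Ioo 0 δ).indicator w τ := by
    rintro τ ⟨hτ0, hτ1⟩
    have hwτ := hw_nonneg τ ⟨hτ0, hτ1⟩
    by_cases hτδ : τ < δ
    · rw [indicator_of_mem (show τ ∈ Ioo 0 δ from ⟨hτ0, hτδ⟩)]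
      nlinarith [hfM (τ * t) (mul_pos hτ0 ht)]
    · rw [indicator_of_notMem (fun h => hτδ h.2), mul_zero, add_zero]
      exact mul_le_mul_of_nonneg_left (hfa _ (by nlinarith)) hwτ
  calc ∫ τ in Ioo 0 1, w τ * f (τ * t)
      ≤ ∫ τ in Ioo 0 1, (w τ * a + M * (Ioo 0 δ).indicator w τ) := by
        refine integral_mono_of_nonneg ?_ ((hw_int.mul_const a).add
          ((hw_int.indicator measurableSet_Ioo).const_mul M)) ?_
        · filter_upwards [self_mem_ae_restrict measurableSet_Ioo] with τ hτ
          exact mul_nonneg (hw_nonneg τ hτ) (hf_nonneg _ (mul_pos hτ.1 ht))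
        · filter_upwards [self_mem_ae_restrict measurableSet_Ioo] with τ hτ
          exact hbound τ hτ
    _ = (∫ x in Ioo 0 1, w x) * a + M * ∫ x in Ioo 0 δ, w x := by
        rw [integral_add (hw_int.mul_const a) ((hw_int.indicator measurableSet_Ioo).const_mul M),
          integral_mul_const, integral_const_mul, setIntegral_indicator measurableSet_Ioo,
          Ioo_inter_Ioo, max_self, min_eq_right hδ]

theorem eventually_le_mul_add_of_eventually_le {g : ℝ → ℝ} {K : ℝ}
    (hw_int : IntegrableOn w (Ioo 0 1)) (hw_nonneg : ∀ x ∈ Ioo (0 : ℝ) 1, 0 ≤ w x)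
    (hf_nonneg : ∀ s : ℝ, 0 < s → 0 ≤ f s) (hfM : ∀ s : ℝ, 0 < s → f s ≤ M)
    (hineq : ∀ t : ℝ, 0 < t → f t ≤ g t + ∫ τ in Ioo (0 : ℝ) 1, w τ * f (τ * t))
    (hg : Tendsto g atTop (𝓝 0)) (ha : 0 ≤ a) (hfa : ∀ᶠ t in atTop, f t ≤ a) (hK : 0 < K) :
    ∀ᶠ t in atTop, f t ≤ (∫ x in Ioo 0 1, w x) * a + K := by
  have hsmall : ∀ᶠ δ in 𝓝[>] 0, M * ∫ x in Ioo 0 δ, w x < K / 2 := by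
    have := (tendsto_setIntegral_Ioo_zero_nhdsGT hw_int).const_mul M
    rw [mul_zero] at this
    exact this.eventually (gt_mem_nhds (half_pos hK))
  obtain ⟨δ, hδ_small, hδ0, hδ1⟩ :=
    (hsmall.and (Ioo_mem_nhdsGT zero_lt_one)).exists
  obtain ⟨T, hT⟩ := eventually_atTop.1 hfa
  filter_upwards [hg.eventually (gt_mem_nhds (half_pos hK)), eventually_gt_atTop 0,
    eventually_ge_atTop (T / δ)] with t hgt ht htT
  have hfa' : ∀ s, δ * t ≤ s → f s ≤ a := fun s hs =>
    hT s (by rw [div_le_iff₀ hδ0] at htT; linarith)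
  calc f t ≤ g t + ∫ τ in Ioo 0 1, w τ * f (τ * t) := hineq t ht
    _ ≤ K / 2 + ((∫ x in Ioo 0 1, w x) * a + M * ∫ x in Ioo 0 δ, w x) :=
        add_le_add hgt.le
          (setIntegral_mul_comp_mul_le hw_int hw_nonneg hf_nonneg hfM ha ht hδ1.le hfa')
    _ ≤ (∫ x in Ioo 0 1, w x) * a + K := by linarith
end

theorem stmt2_general (w f g : ℝ → ℝ)
    (hw_int : IntegrableOn w (Set.Ioo 0 1))
    (hw_nonneg : ∀ x ∈ Set.Ioo (0 : ℝ) 1, 0 ≤ w x)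
    (hw_lt : (∫ x in Set.Ioo (0 : ℝ) 1, w x) < 1)
    (hf_nonneg : ∀ t : ℝ, 0 < t → 0 ≤ f t)
    (hf_bdd : ∃ M : ℝ, ∀ t : ℝ, 0 < t → f t ≤ M)
    (hineq : ∀ t : ℝ, 0 < t → f t ≤ g t + ∫ τ in Set.Ioo (0 : ℝ) 1, w τ * f (τ * t))
    (hg : Filter.Tendsto g Filter.atTop (nhds 0)) :
    Filter.Tendsto f Filter.atTop (nhds 0) := by
  obtain ⟨M, hM⟩ := hf_bdd
  have hM' : ∀ t : ℝ, 0 < t → f t ≤ max M 0 := fun t ht => (hM t ht).trans (le_max_left _ _)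
  have hP : ∀ ε, 0 < ε → ∀ᶠ t in atTop, f t ≤ ε := by
    refine forall_pos_of_mul_add_step (setIntegral_nonneg measurableSet_Ioo hw_nonneg) hw_lt
      (le_max_right M 0) ?_ ?_ ?_
    · filter_upwards [eventually_gt_atTop 0] with t ht using hM' t ht
    · exact fun a b hab hfa => hfa.mono fun t ht => ht.trans hab
    · exact fun a ha hfa K hK => eventually_le_mul_add_of_eventually_le hw_int hw_nonneg
        hf_nonneg hM' hineq hg ha hfa hK
  refine tendsto_order.2 ⟨fun b hb => ?_, fun ε hε => ?_⟩
  · filter_upwards [eventually_gt_atTop 0] with t ht using hb.trans_le (hf_nonneg t ht)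
  · filter_upwards [hP (ε / 2) (half_pos hε)] with t ht using by linarith

/-- If `w ∈ L¹(0,1)`, `w ≥ 0`, `∫₀¹ w < 1`, and `f`, `g` are nonnegative bounded
functions on `(0,∞)` with `f(t) ≤ g(t) + ∫₀¹ w(τ) f(τ t) dτ`, then `g(t) → 0` as
`t → ∞` implies `f(t) → 0` as `t → ∞`. -/
theorem stmt2 (w f g : ℝ → ℝ)
    (hw_int : IntegrableOn w (Set.Ioo 0 1))
    (hw_nonneg : ∀ x ∈ Set.Ioo (0 : ℝ) 1, 0 ≤ w x)
    (hw_lt : (∫ x in Set.Ioo (0 : ℝ) 1, w x) < 1)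
    (hf_nonneg : ∀ t : ℝ, 0 < t → 0 ≤ f t)
    (hg_nonneg : ∀ t : ℝ, 0 < t → 0 ≤ g t)
    (hf_bdd : ∃ M : ℝ, ∀ t : ℝ, 0 < t → f t ≤ M)
    (hg_bdd : ∃ M : ℝ, ∀ t : ℝ, 0 < t → g t ≤ M)
    (hineq : ∀ t : ℝ, 0 < t → f t ≤ g t + ∫ τ in Set.Ioo (0 : ℝ) 1, w τ * f (τ * t))
    (hg : Filter.Tendsto g Filter.atTop (nhds 0)) :
    Filter.Tendsto f Filter.atTop (nhds 0) :=
  stmt2_general w f g hw_int hw_nonneg hw_lt hf_nonneg hf_bdd hineq hg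
end

section
/- Let β ∈ (0,1) and u₀ ∈ L^1(ℝ^n) with ∫ u₀ = 0 and ∫ |x|^β |u₀(x)| dx < ∞. Then the Riesz potential I_β u₀ belongs to L^1(ℝ^n) and ‖I_β u₀‖_{L^1} ≤ C ∫ |x|^β |u₀(x)| dx for a constant C depending only on n and β. -/
/-!
Since `∫ u₀ = 0`, the kernel `|x - y|^(β-n)` of `I_β` may be replaced by
`|x - y|^(β-n) - |x|^(β-n)`, and then Tonelli bounds `‖I_β u₀‖₁` by `|c| ∫ K(y) |u₀(y)| dy` with
`K(y) = ∫ | |x - y|^(β-n) - |x|^(β-n) | dx`. It remains to see `K(y) ≲ |y|^β`. On `|x| ≤ 2|y|`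
each term is integrable at its singularity because `β > 0`, and contributes `O(|y|^β)`. On
`|x| > 2|y|` the mean value theorem bounds the difference by `|y| |x|^(β-n-1)`, which is
integrable at infinity because `β < 1`, and again contributes `O(|y|^β)`.
-/

open MeasureTheory

/-- The Riesz potential `I_β u (x) = C(β,n) ∫ |x-y|^{β-n} u(y) dy`, with the standard
normalizing constant making its Fourier symbol `|ξ|^{-β}`. -/
noncomputable def rieszPotential (n : ℕ) (β : ℝ)
    (u : EuclideanSpace ℝ (Fin n) → ℝ) : EuclideanSpace ℝ (Fin n) → ℝ :=
  fun x => (Real.Gamma (((n : ℝ) - β) / 2) /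
      (2 ^ β * Real.pi ^ ((n : ℝ) / 2) * Real.Gamma (β / 2))) *
    ∫ y, ‖x - y‖ ^ (β - (n : ℝ)) * u y

open Set Metric Module
open scoped ENNReal

theorem Real.abs_rpow_sub_rpow_le_of_nonpos {p a b m : ℝ} (hp : p ≤ 0) (hm : 0 < m)
    (ha : m ≤ a) (hb : m ≤ b) : |a ^ p - b ^ p| ≤ -p * m ^ (p - 1) * |a - b| := by
  have hderiv : ∀ t ∈ Ici m, HasDerivWithinAt (· ^ p) (p * t ^ (p - 1)) (Ici m) t :=
    fun t ht => (Real.hasDerivAt_rpow_const (.inl (hm.trans_le ht).ne')).hasDerivWithinAt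
  have hbound : ∀ t ∈ Ici m, ‖p * t ^ (p - 1)‖ ≤ -p * m ^ (p - 1) := fun t (ht : m ≤ t) => by
    rw [norm_mul, Real.norm_of_nonpos hp,
      Real.norm_of_nonneg (Real.rpow_nonneg (hm.le.trans ht) _)]
    exact mul_le_mul_of_nonneg_left (Real.rpow_le_rpow_of_nonpos hm ht (by linarith))
      (by linarith)
  simpa [Real.norm_eq_abs] using
    (convex_Ici m).norm_image_sub_le_of_norm_hasDerivWithin_le hderiv hbound hb ha

theorem abs_norm_sub_rpow_sub_norm_rpow_le {E : Type*} [SeminormedAddCommGroup E] {p : ℝ}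
    (hp : p ≤ 0) {x y : E} (hxy : 2 * ‖y‖ < ‖x‖) :
    |‖x - y‖ ^ p - ‖x‖ ^ p| ≤ -p * 2 ^ (1 - p) * ‖y‖ * ‖x‖ ^ (p - 1) := by
  have hx : 0 < ‖x‖ := (by positivity : 0 ≤ 2 * ‖y‖).trans_lt hxy
  have hxy' : ‖x‖ / 2 ≤ ‖x - y‖ := by linarith [norm_sub_norm_le x y]
  have hhalf : (‖x‖ / 2) ^ (p - 1) = 2 ^ (1 - p) * ‖x‖ ^ (p - 1) := by
    rw [Real.div_rpow hx.le zero_le_two, div_eq_mul_inv, ← Real.rpow_neg zero_le_two, neg_sub,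
      mul_comm]
  calc |‖x - y‖ ^ p - ‖x‖ ^ p|
      ≤ -p * (‖x‖ / 2) ^ (p - 1) * |‖x - y‖ - ‖x‖| :=
        Real.abs_rpow_sub_rpow_le_of_nonpos hp (by positivity) hxy' (by linarith)
    _ ≤ -p * (‖x‖ / 2) ^ (p - 1) * ‖y‖ := by
        gcongr
        · exact mul_nonneg (by linarith) (by positivity)
        · simpa using abs_norm_sub_norm_le (x - y) x
    _ = -p * 2 ^ (1 - p) * ‖y‖ * ‖x‖ ^ (p - 1) := by rw [hhalf]; ring

section Convolution

variable {M : Type*} [AddGroup M] [MeasurableSpace M] [MeasurableSub₂ M] {μ : Measure M}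
  {k u w : M → ℝ}

theorem aestronglyMeasurable_kernel_sub_mul (hk : Measurable k)
    (hu : AEStronglyMeasurable u μ) :
    AEStronglyMeasurable (fun z : M × M => (k (z.1 - z.2) - k z.1) * u z.2) (μ.prod μ) :=
  ((hk.comp measurable_sub).sub (hk.comp measurable_fst)).aestronglyMeasurable.mul
    (hu.comp_quasiMeasurePreserving Measure.quasiMeasurePreserving_snd)

theorem lintegral_enorm_kernel_sub_mul_le [SFinite μ] (hk : Measurable k)
    (hu : AEStronglyMeasurable u μ) (hw0 : ∀ y, 0 ≤ w y) (hw : Integrable (fun y => w y * |u y|) μ)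
    (hkw : ∀ y, ∫⁻ x, ‖k (x - y) - k x‖ₑ ∂μ ≤ ENNReal.ofReal (w y)) :
    ∫⁻ z, ‖(k (z.1 - z.2) - k z.1) * u z.2‖ₑ ∂μ.prod μ ≤
      ENNReal.ofReal (∫ y, w y * |u y| ∂μ) := by
  rw [lintegral_prod_symm _ (aestronglyMeasurable_kernel_sub_mul hk hu).enorm,
    ofReal_integral_eq_lintegral_ofReal hw (ae_of_all _ fun y => mul_nonneg (hw0 y) (abs_nonneg _))]
  refine lintegral_mono fun y => ?_
  simp only [enorm_mul]
  rw [lintegral_mul_const' _ _ enorm_ne_top, ENNReal.ofReal_mul (hw0 y),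
    ← Real.enorm_eq_ofReal_abs]
  gcongr
  exact hkw y

theorem integrable_integral_kernel_mul_of_integral_eq_zero [SFinite μ] (hk : Measurable k)
    (hu : Integrable u μ) (hu0 : ∫ y, u y ∂μ = 0) (hw0 : ∀ y, 0 ≤ w y)
    (hw : Integrable (fun y => w y * |u y|) μ)
    (hkw : ∀ y, ∫⁻ x, ‖k (x - y) - k x‖ₑ ∂μ ≤ ENNReal.ofReal (w y)) :
    Integrable (fun x => ∫ y, k (x - y) * u y ∂μ) μ ∧
      ∫ x, |∫ y, k (x - y) * u y ∂μ| ∂μ ≤ ∫ y, w y * |u y| ∂μ := by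
  set G : M × M → ℝ := fun z => (k (z.1 - z.2) - k z.1) * u z.2
  have hGle := lintegral_enorm_kernel_sub_mul_le hk hu.1 hw0 hw hkw
  have hG : Integrable G (μ.prod μ) :=
    ⟨aestronglyMeasurable_kernel_sub_mul hk hu.1, hGle.trans_lt ENNReal.ofReal_lt_top⟩
  have hae : (fun x => ∫ y, k (x - y) * u y ∂μ) =ᵐ[μ] fun x => ∫ y, G (x, y) ∂μ := by
    filter_upwards [hG.prod_right_ae] with x hx
    calc ∫ y, k (x - y) * u y ∂μ = ∫ y, G (x, y) + k x * u y ∂μ := by simp only [G]; ring_nf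
      _ = ∫ y, G (x, y) ∂μ := by
        rw [integral_add hx (hu.const_mul _), integral_const_mul, hu0, mul_zero, add_zero]
  have hint := hG.integral_prod_left.congr hae.symm
  refine ⟨hint, (ENNReal.ofReal_le_ofReal_iff
    (integral_nonneg fun y => mul_nonneg (hw0 y) (abs_nonneg _))).1 ?_⟩
  simp only [← Real.norm_eq_abs, ofReal_integral_norm_eq_lintegral_enorm hint]
  calc _ = ∫⁻ x, ‖∫ y, G (x, y) ∂μ‖ₑ ∂μ :=
        lintegral_congr_ae (hae.mono fun x hx => congrArg (‖·‖ₑ) hx)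
    _ ≤ ∫⁻ x, ∫⁻ y, ‖G (x, y)‖ₑ ∂μ ∂μ :=
      lintegral_mono fun x => enorm_integral_le_lintegral_enorm _
    _ = ∫⁻ z, ‖G z‖ₑ ∂μ.prod μ := (lintegral_prod _ hG.1.enorm).symm
    _ ≤ _ := hGle

end Convolution

section AddHaar

variable {E : Type*} [NormedAddCommGroup E] [NormedSpace ℝ E] [FiniteDimensional ℝ E]
  [MeasurableSpace E] [BorelSpace E] [Nontrivial E] (μ : Measure E) [μ.IsAddHaarMeasure]

theorem lintegral_comp_norm_eq_toSphere_mul {f : ℝ → ℝ≥0∞} (hf : Measurable f) :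
    ∫⁻ x, f ‖x‖ ∂μ =
      μ.toSphere univ * ∫⁻ t in Ioi 0, ENNReal.ofReal (t ^ (finrank ℝ E - 1)) * f t :=
  calc ∫⁻ x, f ‖x‖ ∂μ = ∫⁻ x : ({(0 : E)}ᶜ : Set E), f ‖x.1‖ ∂μ.comap (↑) := by
        rw [lintegral_subtype_comap (measurableSet_singleton _).compl fun x => f ‖x‖,
          restrict_compl_singleton]
    _ = ∫⁻ p, f p.2 ∂μ.toSphere.prod (.volumeIoiPow (finrank ℝ E - 1)) := by
        simpa using μ.measurePreserving_homeomorphUnitSphereProd.lintegral_comp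
          (hf.comp (measurable_subtype_coe.comp measurable_snd))
    _ = μ.toSphere univ * ∫⁻ t : Ioi (0 : ℝ), f t ∂.volumeIoiPow (finrank ℝ E - 1) := by
        rw [lintegral_prod _ (by fun_prop)]
        exact (lintegral_const (∫⁻ t : Ioi (0 : ℝ), f t ∂.volumeIoiPow (finrank ℝ E - 1))).trans
          (mul_comm _ _)
    _ = _ := by
        rw [Measure.volumeIoiPow, lintegral_withDensity_eq_lintegral_mul _ (by fun_prop)
          (by fun_prop)]
        exact congrArg _ (lintegral_subtype_comap measurableSet_Ioi
          fun t => ENNReal.ofReal (t ^ (finrank ℝ E - 1)) * f t)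

theorem setLIntegral_norm_preimage_rpow (p : ℝ) {s : Set ℝ} (hs : MeasurableSet s) :
    ∫⁻ x in norm ⁻¹' s, ENNReal.ofReal (‖x‖ ^ p) ∂μ =
      μ.toSphere univ * ∫⁻ t in s ∩ Ioi 0, ENNReal.ofReal (t ^ (p + finrank ℝ E - 1)) := by
  have hd : 1 ≤ finrank ℝ E := finrank_pos
  have hcomp (x : E) : (norm ⁻¹' s).indicator (fun x => ENNReal.ofReal (‖x‖ ^ p)) x =
      s.indicator (fun t => ENNReal.ofReal (t ^ p)) ‖x‖ :=
    indicator_comp_right (g := fun t => ENNReal.ofReal (t ^ p)) norm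
  rw [← lintegral_indicator (hs.preimage measurable_norm), lintegral_congr hcomp,
    lintegral_comp_norm_eq_toSphere_mul μ ((by fun_prop : Measurable _).indicator hs),
    ← setLIntegral_indicator hs]
  congr 1
  refine setLIntegral_congr_fun measurableSet_Ioi fun t (ht : 0 < t) => ?_
  by_cases hts : t ∈ s
  · rw [indicator_of_mem hts, indicator_of_mem hts, ← ENNReal.ofReal_mul (by positivity),
      ← Real.rpow_natCast, ← Real.rpow_add ht, Nat.cast_sub hd]
    ring_nf
  · simp [indicator_of_notMem hts]

theorem setLIntegral_ball_norm_rpow {p r : ℝ} (hp : -(finrank ℝ E : ℝ) < p) (hr : 0 < r) :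
    ∫⁻ x in ball 0 r, ENNReal.ofReal (‖x‖ ^ p) ∂μ =
      μ.toSphere univ * ENNReal.ofReal (r ^ (p + finrank ℝ E) / (p + finrank ℝ E)) := by
  have hball : ball (0 : E) r = norm ⁻¹' Iio r := by ext; simp
  have hint : IntegrableOn (fun t : ℝ => t ^ (p + finrank ℝ E - 1)) (Ioc 0 r) :=
    (intervalIntegral.intervalIntegrable_rpow' (by linarith)).1
  rw [hball, setLIntegral_norm_preimage_rpow μ p measurableSet_Iio, Iio_inter_Ioi,
    setLIntegral_congr Ioo_ae_eq_Ioc, ← ofReal_integral_eq_lintegral_ofReal hint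
      (ae_restrict_of_forall_mem measurableSet_Ioc fun t ht => Real.rpow_nonneg ht.1.le _),
    ← intervalIntegral.integral_of_le hr.le, integral_rpow (.inl (by linarith))]
  rw [sub_add_cancel, Real.zero_rpow (by linarith), sub_zero]

theorem setLIntegral_compl_closedBall_norm_rpow {p r : ℝ} (hp : p < -(finrank ℝ E : ℝ))
    (hr : 0 < r) :
    ∫⁻ x in (closedBall 0 r)ᶜ, ENNReal.ofReal (‖x‖ ^ p) ∂μ =
      μ.toSphere univ * ENNReal.ofReal (-r ^ (p + finrank ℝ E) / (p + finrank ℝ E)) := by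
  have hcompl : (closedBall (0 : E) r)ᶜ = norm ⁻¹' Ioi r := by ext; simp
  have hexp : p + finrank ℝ E - 1 < -1 := by linarith
  rw [hcompl, setLIntegral_norm_preimage_rpow μ p measurableSet_Ioi,
    inter_eq_left.2 (Ioi_subset_Ioi hr.le), ← ofReal_integral_eq_lintegral_ofReal
      (integrableOn_Ioi_rpow_of_lt hexp hr)
      (ae_restrict_of_forall_mem measurableSet_Ioi fun t ht => Real.rpow_nonneg (hr.trans ht).le _),
    integral_Ioi_rpow_of_lt hexp hr, sub_add_cancel]

theorem setLIntegral_closedBall_enorm_norm_sub_rpow_sub_le {β : ℝ} (hβ : 0 < β) {y : E}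
    (hy : y ≠ 0) :
    ∫⁻ x in closedBall 0 (2 * ‖y‖),
        ‖‖x - y‖ ^ (β - finrank ℝ E) - ‖x‖ ^ (β - finrank ℝ E)‖ₑ ∂μ ≤
      μ.toSphere univ * ENNReal.ofReal (2 * 4 ^ β / β * ‖y‖ ^ β) := by
  set p : ℝ := β - finrank ℝ E
  have hy0 : 0 < ‖y‖ := norm_pos_iff.2 hy
  have hball : ∫⁻ x in ball 0 (4 * ‖y‖), ENNReal.ofReal (‖x‖ ^ p) ∂μ =
      μ.toSphere univ * ENNReal.ofReal ((4 * ‖y‖) ^ β / β) := by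
    rw [setLIntegral_ball_norm_rpow μ (by linarith) (by positivity), sub_add_cancel]
  have hsub : closedBall (0 : E) (2 * ‖y‖) ⊆ ball 0 (4 * ‖y‖) :=
    closedBall_subset_ball (by linarith)
  have hsub' : closedBall (0 : E) (2 * ‖y‖) ⊆ (· - y) ⁻¹' ball 0 (4 * ‖y‖) := fun x hx => by
    simp only [mem_closedBall_zero_iff, mem_preimage, mem_ball_zero_iff] at hx ⊢
    linarith [norm_sub_le x y]
  calc _ ≤ ∫⁻ x in closedBall 0 (2 * ‖y‖),
        ENNReal.ofReal (‖x - y‖ ^ p) + ENNReal.ofReal (‖x‖ ^ p) ∂μ := by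
        refine lintegral_mono fun x => ?_
        rw [← Real.enorm_of_nonneg (by positivity), ← Real.enorm_of_nonneg (by positivity)]
        exact enorm_sub_le
    _ ≤ ∫⁻ x in (· - y) ⁻¹' ball 0 (4 * ‖y‖), ENNReal.ofReal (‖x - y‖ ^ p) ∂μ +
        ∫⁻ x in ball 0 (4 * ‖y‖), ENNReal.ofReal (‖x‖ ^ p) ∂μ := by
        rw [lintegral_add_left (by fun_prop)]
        exact add_le_add (lintegral_mono_set hsub') (lintegral_mono_set hsub)
    _ = 2 * (μ.toSphere univ * ENNReal.ofReal ((4 * ‖y‖) ^ β / β)) := by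
        rw [(measurePreserving_sub_right μ y).setLIntegral_comp_preimage measurableSet_ball
          (f := fun z => ENNReal.ofReal (‖z‖ ^ p)) (by fun_prop), hball, two_mul]
    _ = _ := by
        rw [mul_left_comm, ← ENNReal.ofReal_ofNat 2, ← ENNReal.ofReal_mul zero_le_two,
          Real.mul_rpow zero_le_four hy0.le]
        ring_nf

theorem setLIntegral_compl_closedBall_enorm_norm_sub_rpow_sub_le {β : ℝ} (hβ : β < 1) {y : E}
    (hy : y ≠ 0) :
    ∫⁻ x in (closedBall 0 (2 * ‖y‖))ᶜ,
        ‖‖x - y‖ ^ (β - finrank ℝ E) - ‖x‖ ^ (β - finrank ℝ E)‖ₑ ∂μ ≤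
      μ.toSphere univ *
        ENNReal.ofReal ((finrank ℝ E - β) * 2 ^ finrank ℝ E / (1 - β) * ‖y‖ ^ β) := by
  have hd : (1 : ℝ) ≤ finrank ℝ E := Nat.one_le_cast.2 finrank_pos
  have hy0 : 0 < ‖y‖ := norm_pos_iff.2 hy
  set A := (finrank ℝ E - β) * 2 ^ (1 - (β - finrank ℝ E)) * ‖y‖
  have hA : 0 ≤ A := mul_nonneg (mul_nonneg (by linarith) (by positivity)) hy0.le
  calc _ ≤ ∫⁻ x in (closedBall 0 (2 * ‖y‖))ᶜ,
        ENNReal.ofReal A * ENNReal.ofReal (‖x‖ ^ (β - finrank ℝ E - 1)) ∂μ := by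
        refine setLIntegral_mono (by fun_prop) fun x hx => ?_
        rw [Real.enorm_eq_ofReal_abs, ← ENNReal.ofReal_mul hA]
        refine ENNReal.ofReal_le_ofReal
          ((abs_norm_sub_rpow_sub_norm_rpow_le (by linarith) ?_).trans_eq ?_)
        · simpa using hx
        · ring
    _ = ENNReal.ofReal A *
        (μ.toSphere univ * ENNReal.ofReal (-(2 * ‖y‖) ^ (β - 1) / (β - 1))) := by
        rw [lintegral_const_mul' _ _ ENNReal.ofReal_ne_top,
          setLIntegral_compl_closedBall_norm_rpow μ (by linarith) (by positivity),
          sub_right_comm, sub_add_cancel]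
    _ = _ := by
        rw [mul_left_comm, ← ENNReal.ofReal_mul hA]
        congr 2
        have h2 : (2 : ℝ) ^ (1 - (β - finrank ℝ E)) * 2 ^ (β - 1) = 2 ^ finrank ℝ E := by
          rw [← Real.rpow_add two_pos, ← Real.rpow_natCast]
          ring_nf
        have hy1 : ‖y‖ ^ (β - 1) = ‖y‖ ^ β / ‖y‖ := Real.rpow_sub_one hy0.ne' β
        rw [Real.mul_rpow zero_le_two hy0.le, ← h2, hy1]
        have : 1 - β ≠ 0 := by linarith
        have : β - 1 ≠ 0 := by linarith
        field_simp
        ring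

theorem exists_lintegral_enorm_norm_sub_rpow_sub_norm_rpow_le {β : ℝ} (hβ0 : 0 < β)
    (hβ1 : β < 1) :
    ∃ C, 0 ≤ C ∧ ∀ y : E,
      ∫⁻ x, ‖‖x - y‖ ^ (β - finrank ℝ E) - ‖x‖ ^ (β - finrank ℝ E)‖ₑ ∂μ ≤
        ENNReal.ofReal (C * ‖y‖ ^ β) := by
  have hd : (1 : ℝ) ≤ finrank ℝ E := Nat.one_le_cast.2 finrank_pos
  have hfar : 0 ≤ (finrank ℝ E - β) * 2 ^ finrank ℝ E / (1 - β) :=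
    div_nonneg (mul_nonneg (by linarith) (by positivity)) (by linarith)
  refine ⟨(μ.toSphere univ).toReal * (2 * 4 ^ β / β +
    (finrank ℝ E - β) * 2 ^ finrank ℝ E / (1 - β)), by positivity, fun y => ?_⟩
  rcases eq_or_ne y 0 with rfl | hy
  · simp
  rw [← lintegral_add_compl _ (measurableSet_closedBall (x := 0) (ε := 2 * ‖y‖))]
  refine (add_le_add (setLIntegral_closedBall_enorm_norm_sub_rpow_sub_le μ hβ0 hy)
    (setLIntegral_compl_closedBall_enorm_norm_sub_rpow_sub_le μ hβ1 hy)).trans_eq ?_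
  rw [← mul_add, ← ENNReal.ofReal_add (by positivity) (by positivity), ← add_mul, mul_assoc,
    ENNReal.ofReal_mul ENNReal.toReal_nonneg, ENNReal.ofReal_toReal (measure_ne_top _ _)]

end AddHaar

/-- If `β ∈ (0,1)`, `u₀ ∈ L¹(ℝⁿ)`, `∫ u₀ = 0` and `∫ |x|^β |u₀(x)| dx < ∞`, then
`I_β u₀ ∈ L¹(ℝⁿ)` with `‖I_β u₀‖₁ ≤ C ∫ |x|^β |u₀(x)| dx`, `C = C(n,β)`. -/
theorem stmt6 (n : ℕ) (β : ℝ) (hn : 1 ≤ n) (hβ0 : 0 < β) (hβ1 : β < 1) :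
    ∃ C : ℝ, 0 < C ∧ ∀ u₀ : EuclideanSpace ℝ (Fin n) → ℝ,
      Integrable u₀ → (∫ x, u₀ x) = 0 →
      Integrable (fun x => ‖x‖ ^ β * |u₀ x|) →
      Integrable (rieszPotential n β u₀) ∧
      (∫ x, |rieszPotential n β u₀ x|) ≤ C * ∫ x, ‖x‖ ^ β * |u₀ x| := by
  have : Nontrivial (EuclideanSpace ℝ (Fin n)) :=
    Module.nontrivial_of_finrank_pos (R := ℝ) (by simp only [finrank_euclideanSpace_fin]; omega)
  obtain ⟨C, hC0, hC⟩ := exists_lintegral_enorm_norm_sub_rpow_sub_norm_rpow_le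
    (volume : Measure (EuclideanSpace ℝ (Fin n))) hβ0 hβ1
  rw [finrank_euclideanSpace_fin] at hC
  set c := Real.Gamma (((n : ℝ) - β) / 2) /
    (2 ^ β * Real.pi ^ ((n : ℝ) / 2) * Real.Gamma (β / 2))
  refine ⟨|c| * C + 1, by positivity, fun u₀ hu hu0 hβu => ?_⟩
  obtain ⟨hint, hle⟩ := integrable_integral_kernel_mul_of_integral_eq_zero
    (k := fun z => ‖z‖ ^ (β - n)) (w := fun y => C * ‖y‖ ^ β) (by fun_prop) hu hu0
    (fun y => by positivity) (by simpa only [mul_assoc] using hβu.const_mul C) hC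
  have hnonneg : 0 ≤ ∫ x, ‖x‖ ^ β * |u₀ x| := integral_nonneg fun x => by positivity
  refine ⟨hint.const_mul c, ?_⟩
  calc ∫ x, |rieszPotential n β u₀ x| = |c| * ∫ x, |∫ y, ‖x - y‖ ^ (β - n) * u₀ y| := by
        simp only [rieszPotential, abs_mul, integral_const_mul, c]
    _ ≤ |c| * (C * ∫ x, ‖x‖ ^ β * |u₀ x|) := by
        gcongr
        simpa only [mul_assoc, integral_const_mul] using hle
    _ ≤ (|c| * C + 1) * ∫ x, ‖x‖ ^ β * |u₀ x| := by nlinarith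
end

section
/- For β ∈ (0,1), sup over unit vectors e ∈ ℝ^n of ∫_{ℝ^n} | |ω − e|^{β−n} − |ω|^{β−n} | dω is finite. -/
/-!
Split `ℝⁿ` at `‖ω‖ = 2`. Near the origin the two kernels are bounded separately by
`‖·‖ ^ (β - n)` restricted to a ball, which is locally integrable because `β - n > -n`;
integrating the translated copy gives the same value, so this part is uniform in `e`.
Far out, the mean value theorem for `t ↦ t ^ (β - n)` on `[‖ω‖ / 2, ∞)` bounds the difference
by a multiple of `‖ω‖ ^ (β - n - 1)`, which is integrable at infinity because `β - n - 1 < -n`.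
-/

open MeasureTheory Set Metric Module

lemma Real.abs_rpow_sub_rpow_le {a c x y : ℝ} (ha : a ≤ 1) (hc : 0 < c) (hx : c ≤ x)
    (hy : c ≤ y) : |x ^ a - y ^ a| ≤ |a| * c ^ (a - 1) * |x - y| := by
  have hderiv : ∀ t ∈ Ici c, HasDerivWithinAt (· ^ a) (a * t ^ (a - 1)) (Ici c) t :=
    fun t ht ↦ (Real.hasDerivAt_rpow_const (.inl (hc.trans_le ht).ne')).hasDerivWithinAt
  have hbound : ∀ t ∈ Ici c, ‖a * t ^ (a - 1)‖ ≤ |a| * c ^ (a - 1) := by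
    intro t (ht : c ≤ t)
    rw [Real.norm_eq_abs, abs_mul, abs_of_pos (Real.rpow_pos_of_pos (hc.trans_le ht) _)]
    exact mul_le_mul_of_nonneg_left (Real.rpow_le_rpow_of_nonpos hc ht (by linarith))
      (abs_nonneg a)
  exact (convex_Ici c).norm_image_sub_le_of_norm_hasDerivWithin_le hderiv hbound hy hx

lemma abs_norm_sub_rpow_sub_norm_rpow_le_s7 {E : Type*} [NormedAddCommGroup E] {a : ℝ} (ha : a ≤ 1)
    {e : E} (he : ‖e‖ ≤ 1) (ω : E) :
    |‖ω - e‖ ^ a - ‖ω‖ ^ a| ≤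
      (ball 0 3).indicator (‖·‖ ^ a) (ω - e) + (ball 0 3).indicator (‖·‖ ^ a) ω +
        (ball 0 2)ᶜ.indicator (fun x ↦ |a| * (‖x‖ / 2) ^ (a - 1)) ω := by
  have hdist : |‖ω - e‖ - ‖ω‖| ≤ 1 :=
    (abs_norm_sub_norm_le (ω - e) ω).trans (by rwa [sub_sub_cancel_left, norm_neg])
  obtain ⟨hdist₁, hdist₂⟩ := abs_le.1 hdist
  by_cases hω : ‖ω‖ < 2
  · have hshift : ω - e ∈ ball (0 : E) 3 := mem_ball_zero_iff.2 (by linarith)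
    have hfar : ω ∉ (ball (0 : E) 2)ᶜ := not_not.2 (mem_ball_zero_iff.2 hω)
    rw [indicator_of_mem hshift, indicator_of_mem (mem_ball_zero_iff.2 (by linarith)),
      indicator_of_notMem hfar, add_zero]
    have h₁ : 0 ≤ ‖ω - e‖ ^ a := by positivity
    have h₂ : 0 ≤ ‖ω‖ ^ a := by positivity
    exact abs_sub_le_iff.2 ⟨by linarith, by linarith⟩
  · push Not at hω
    have hfar : ω ∈ (ball (0 : E) 2)ᶜ := fun h ↦ (mem_ball_zero_iff.1 h).not_ge hω
    have h₁ : 0 ≤ (ball (0 : E) 3).indicator (‖·‖ ^ a) (ω - e) :=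
      indicator_nonneg (fun _ _ ↦ by positivity) _
    have h₂ : 0 ≤ (ball (0 : E) 3).indicator (‖·‖ ^ a) ω :=
      indicator_nonneg (fun _ _ ↦ by positivity) _
    rw [indicator_of_mem hfar]
    calc |‖ω - e‖ ^ a - ‖ω‖ ^ a| ≤ |a| * (‖ω‖ / 2) ^ (a - 1) * |‖ω - e‖ - ‖ω‖| :=
          Real.abs_rpow_sub_rpow_le ha (by positivity) (by linarith) (by linarith)
      _ ≤ |a| * (‖ω‖ / 2) ^ (a - 1) := mul_le_of_le_one_right (by positivity) hdist
      _ ≤ _ := by linarith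

variable {E : Type*} [NormedAddCommGroup E] [NormedSpace ℝ E] [FiniteDimensional ℝ E]
  [MeasurableSpace E] [BorelSpace E] (μ : Measure E) [μ.IsAddHaarMeasure]

lemma integrableOn_ball_norm_rpow (hd : 1 ≤ finrank ℝ E) {a : ℝ}
    (ha : -(finrank ℝ E : ℝ) < a) (R : ℝ) :
    IntegrableOn (fun x : E ↦ ‖x‖ ^ a) (ball 0 R) μ := by
  refine integrableOn_ball_of_norm_le_rpow (C := 1) (α := -a) hd (by linarith)
    (.of_forall fun x ↦ ?_) (measurable_norm.pow_const a).aestronglyMeasurable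
  rw [neg_neg, one_mul, Real.norm_eq_abs, abs_of_nonneg (by positivity)]

lemma integrableOn_compl_ball_norm_rpow [Nontrivial E] {a : ℝ}
    (ha : a < -(finrank ℝ E : ℝ)) {R : ℝ} (hR : 0 < R) :
    IntegrableOn (fun x : E ↦ ‖x‖ ^ a) (ball 0 R)ᶜ μ := by
  have hradial :
      (ball (0 : E) R)ᶜ.indicator (‖·‖ ^ a) = fun x ↦ (Ici R).indicator (· ^ a) ‖x‖ := by
    ext x
    simp [indicator]
  rw [← integrable_indicator_iff measurableSet_ball.compl, hradial, integrable_fun_norm_addHaar]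
  have htail : IntegrableOn (fun y : ℝ ↦ y ^ ((finrank ℝ E - 1 : ℕ) + a)) (Ici R) :=
    (integrableOn_Ici_iff_integrableOn_Ioi).2 <| integrableOn_Ioi_rpow_of_lt (by
      push_cast [Nat.cast_sub (finrank_pos (R := ℝ) (M := E))]; linarith) hR
  refine (htail.integrable_indicator measurableSet_Ici).integrableOn.congr_fun
    (fun y (hy : 0 < y) ↦ ?_) measurableSet_Ioi
  by_cases hyR : R ≤ y <;> simp [indicator, hyR, Real.rpow_add hy, Real.rpow_natCast]

theorem exists_integral_abs_norm_sub_rpow_sub_norm_rpow_le (hd : 1 ≤ finrank ℝ E) {a : ℝ}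
    (ha₀ : -(finrank ℝ E : ℝ) < a) (ha₁ : a < 1 - finrank ℝ E) :
    ∃ C, ∀ e : E, ‖e‖ ≤ 1 →
      Integrable (fun ω ↦ |‖ω - e‖ ^ a - ‖ω‖ ^ a|) μ ∧ ∫ ω, |‖ω - e‖ ^ a - ‖ω‖ ^ a| ∂μ ≤ C := by
  have : Nontrivial E := Module.nontrivial_of_finrank_pos (R := ℝ) hd
  set near := (ball (0 : E) 3).indicator (‖·‖ ^ a)
  set far := (ball (0 : E) 2)ᶜ.indicator (fun x ↦ |a| * (‖x‖ / 2) ^ (a - 1))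
  have hnear : Integrable near μ :=
    (integrableOn_ball_norm_rpow μ hd ha₀ 3).integrable_indicator measurableSet_ball
  have hfar : Integrable far μ := by
    refine IntegrableOn.integrable_indicator ?_ measurableSet_ball.compl
    refine IntegrableOn.congr_fun (((integrableOn_compl_ball_norm_rpow μ (a := a - 1)
      (by linarith) two_pos).div_const (2 ^ (a - 1))).const_mul |a|) (fun x _ ↦ ?_)
      measurableSet_ball.compl
    rw [Real.div_rpow (norm_nonneg x) zero_le_two]
  refine ⟨2 * ∫ x, near x ∂μ + ∫ x, far x ∂μ, fun e he ↦ ?_⟩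
  have hnear_e : Integrable (fun ω ↦ near (ω - e)) μ := hnear.comp_sub_right e
  have hnear_sum : Integrable (fun ω ↦ near (ω - e) + near ω) μ := hnear_e.fun_add hnear
  have hmajorant : Integrable (fun ω ↦ near (ω - e) + near ω + far ω) μ := hnear_sum.fun_add hfar
  have hbound := abs_norm_sub_rpow_sub_norm_rpow_le_s7 (a := a) (by linarith) he
  have hint : Integrable (fun ω ↦ |‖ω - e‖ ^ a - ‖ω‖ ^ a|) μ :=
    hmajorant.mono' (by fun_prop) (.of_forall fun ω ↦ by simpa using hbound ω)
  refine ⟨hint, ?_⟩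
  calc ∫ ω, |‖ω - e‖ ^ a - ‖ω‖ ^ a| ∂μ ≤ ∫ ω, near (ω - e) + near ω + far ω ∂μ :=
        integral_mono hint hmajorant hbound
    _ = 2 * ∫ x, near x ∂μ + ∫ x, far x ∂μ := by
      rw [integral_add hnear_sum hfar, integral_add hnear_e hnear,
        integral_sub_right_eq_self near e]
      ring

/-- For `β ∈ (0,1)`, the quantity `∫_{ℝⁿ} | |ω-e|^{β-n} - |ω|^{β-n} | dω` is bounded
uniformly over unit vectors `e ∈ ℝⁿ`. -/
theorem stmt7 (n : ℕ) (β : ℝ) (hn : 1 ≤ n) (hβ0 : 0 < β) (hβ1 : β < 1) :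
    ∃ C : ℝ, ∀ e : EuclideanSpace ℝ (Fin n), ‖e‖ = 1 →
      (IntegrableOn (fun ω : EuclideanSpace ℝ (Fin n) =>
          |‖ω - e‖ ^ (β - (n : ℝ)) - ‖ω‖ ^ (β - (n : ℝ))|) Set.univ) ∧
      (∫ ω : EuclideanSpace ℝ (Fin n),
          |‖ω - e‖ ^ (β - (n : ℝ)) - ‖ω‖ ^ (β - (n : ℝ))|) ≤ C := by
  have hd : finrank ℝ (EuclideanSpace ℝ (Fin n)) = n := finrank_euclideanSpace_fin
  obtain ⟨C, hC⟩ := exists_integral_abs_norm_sub_rpow_sub_norm_rpow_le volume (a := β - n)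
    (by rwa [hd]) (by rw [hd]; linarith) (by rw [hd]; linarith)
  refine ⟨C, fun e he ↦ ?_⟩
  obtain ⟨hint, hle⟩ := hC e he.le
  exact ⟨hint.integrableOn, hle⟩
end
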